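/- arXiv:math/0504188 — 6 statements merged into one kernel-verified Lean document; each statement's English description precedes it below -/
import Mathlib

section
/- For indeterminates x_1,...,x_l, a prime p, and positive integers i and b, the multinomial expansion satisfies (x_1 + ... + x_l)^(p^i * b) ≡ (x_1^p + ... + x_l^p)^(p^(i-1) * b) modulo p^i, i.e., every coefficient of the difference of the two polynomials is divisible by p^i. -/
/-- For indeterminates `x_1, …, x_l`, a prime `p`, and positive integers `i` and `b`,
`(x_1 + ⋯ + x_l)^(p^i * b) ≡ (x_1^p + ⋯ + x_l^p)^(p^(i-1) * b)` modulo `p^i`: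
every coefficient of the difference is divisible by `p^i`. -/
theorem stmt0 (l : ℕ) (p : ℕ) (hp : p.Prime) (i b : ℕ) (hi : 1 ≤ i) (hb : 1 ≤ b)
    (m : Fin l →₀ ℕ) :
    (p : ℤ) ^ i ∣
      MvPolynomial.coeff m
        ((∑ j : Fin l, MvPolynomial.X j : MvPolynomial (Fin l) ℤ) ^ (p ^ i * b)
          - (∑ j : Fin l, (MvPolynomial.X j) ^ p) ^ (p ^ (i - 1) * b)) := by
  haveI := Fact.mk hp
  set S : MvPolynomial (Fin l) ℤ := ∑ j : Fin l, MvPolynomial.X j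
  set T : MvPolynomial (Fin l) ℤ := ∑ j : Fin l, (MvPolynomial.X j) ^ p
  have h1 : (p : MvPolynomial (Fin l) ℤ) ∣ S ^ p - T := by
    have := (MvPolynomial.C_dvd_iff_zmod (σ := Fin l) p (S ^ p - T)).2
    rw [MvPolynomial.C_eq_coe_nat] at this
    apply this
    simp only [S, T, map_sub, map_pow, map_sum, sub_eq_zero]
    rw [sum_pow_char]
  have h2 : (p : MvPolynomial (Fin l) ℤ) ^ i ∣ (S ^ p) ^ p ^ (i - 1) - T ^ p ^ (i - 1) := by
    have := dvd_sub_pow_of_dvd_sub h1 (i - 1)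
    rwa [Nat.sub_add_cancel hi] at this
  have h3 : (p : MvPolynomial (Fin l) ℤ) ^ i ∣ S ^ (p ^ i * b) - T ^ (p ^ (i - 1) * b) := by
    have key : S ^ (p ^ i) = (S ^ p) ^ p ^ (i - 1) := by
      rw [← pow_mul, ← pow_succ', Nat.sub_add_cancel hi]
    rw [pow_mul, pow_mul, key]
    exact h2.trans (sub_dvd_pow_sub_pow _ _ b)
  have h4 : MvPolynomial.C ((p : ℤ) ^ i) ∣ S ^ (p ^ i * b) - T ^ (p ^ (i - 1) * b) := by
    simpa [map_pow] using h3
  exact (MvPolynomial.C_dvd_iff_dvd_coeff _ _).1 h4 m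
end

section
/- Let n = (n_1, ..., n_l) be nonnegative integers, not all zero, with gcd(n_1,...,n_l) = 1, and let |n| = n_1 + ... + n_l. Then for every positive integer k, the multinomial coefficient (k|n|)! / ((k n_1)! ⋯ (k n_l)!) is divisible by |n|. -/
/-! Since `(k+1) · C(n+1, k+1) = (n+1) · C(n, k)`, the total `∑ f` divides `f j · multinomial f`
for every part `f j`, hence it divides `gcd f · multinomial f`. Applied to `f = k • n`, whose
gcd is `k`, this gives `k |n| ∣ k · multinomial (k • n)`. -/

namespace Nat

theorem dvd_mul_choose (n k : ℕ) : n ∣ k * n.choose k := by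
  rcases n with _ | n
  · rcases k with _ | k <;> simp
  rcases k with _ | k
  · simp
  exact ⟨n.choose k, by rw [add_one_mul_choose_eq, mul_comm]⟩

theorem sum_dvd_mul_multinomial {α : Type*} {s : Finset α} (f : α → ℕ) {j : α} (hj : j ∈ s) :
    (∑ i ∈ s, f i) ∣ f j * multinomial s f := by
  classical
  rw [← Finset.insert_erase hj, multinomial_insert (Finset.notMem_erase j s),
    Finset.sum_insert (Finset.notMem_erase j s), ← mul_assoc]
  exact (dvd_mul_choose _ _).mul_right _

theorem sum_dvd_gcd_mul_multinomial {α : Type*} (s : Finset α) (f : α → ℕ) :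
    (∑ i ∈ s, f i) ∣ s.gcd f * multinomial s f := by
  rw [← normalize_eq (multinomial s f), ← Finset.gcd_mul_right]
  exact Finset.dvd_gcd fun j hj => sum_dvd_mul_multinomial f hj

end Nat

theorem stmt1_general (l : ℕ) (n : Fin l → ℕ)
    (hgcd : Finset.univ.gcd n = 1) (k : ℕ) (hk : 1 ≤ k) :
    (∑ j, n j) ∣ Nat.multinomial Finset.univ (fun j => k * n j) := by
  have h := Nat.sum_dvd_gcd_mul_multinomial Finset.univ (fun j => k * n j)
  rw [← Finset.mul_sum, Finset.gcd_mul_left, normalize_eq, hgcd, mul_one] at h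
  exact Nat.dvd_of_mul_dvd_mul_left (by omega) h

/-- If `n = (n_1,…,n_l)` are nonnegative integers, not all zero, with gcd `1`,
and `|n| = n_1 + ⋯ + n_l`, then for every positive integer `k` the multinomial
coefficient `(k|n|)! / ((k n_1)! ⋯ (k n_l)!)` is divisible by `|n|`. -/
theorem stmt1 (l : ℕ) (n : Fin l → ℕ) (hnz : ∃ j, n j ≠ 0)
    (hgcd : Finset.univ.gcd n = 1) (k : ℕ) (hk : 1 ≤ k) :
    (∑ j, n j) ∣ Nat.multinomial Finset.univ (fun j => k * n j) :=
  stmt1_general l n hgcd k hk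
end

section
/- As formal power series in z over Q(q): ∏_{i=0}^∞ (1 + q^i z) = Σ_{n=0}^∞ q^{n(n-1)/2} z^n / ((1-q)(1-q^2)⋯(1-q^n)). -/
/-!
Let `S n = ∑ₘ a(n, m) qᵐ`, where `a(n, m)` counts the `n`-element sets of naturals with sum `m`.
An `(n + 1)`-set either avoids `0`, and is then an `(n + 1)`-set shifted up by one, or is `0`
together with a shifted `n`-set; shifting raises the sum by the cardinality, so
`S (n + 1) = q^(n+1) S (n + 1) + qⁿ S n`, i.e. `S (n + 1) (1 - q^(n+1)) = qⁿ S n`.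
Induction from `S 0 = 1` gives `S n ∏_{k=1}^n (1 - qᵏ) = q⁰ q¹ ⋯ q^(n-1) = q^(n(n-1)/2)`.
-/

open PowerSeries Finset

namespace SumFiber

def sumFiber (n m : ℕ) : Set (Finset ℕ) := {s | s.card = n ∧ ∑ i ∈ s, i = m}

theorem sumFiber_finite (n m : ℕ) : (sumFiber n m).Finite := by
  refine (range (m + 1)).powerset.finite_toSet.subset fun s ⟨_, hsum⟩ => ?_
  simp only [coe_powerset, Set.mem_preimage, Set.mem_powerset_iff, coe_subset]
  intro i hi
  have := single_le_sum (fun j _ => Nat.zero_le j) hi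
  rw [mem_range]
  omega

theorem sumFiber_zero (m : ℕ) : sumFiber 0 m = if m = 0 then {∅} else ∅ := by
  ext s
  simp only [sumFiber, card_eq_zero, Set.mem_ofPred_eq]
  split_ifs with hm <;> aesop

theorem sum_map_succ (s : Finset ℕ) :
    ∑ i ∈ s.map (addRightEmbedding 1), i = ∑ i ∈ s, i + s.card := by
  simp [sum_add_distrib]

theorem range_map_succ : Set.range (map (addRightEmbedding 1)) = {s | 0 ∉ s} := by
  ext s
  refine ⟨?_, fun h => ⟨s.preimage (· + 1) (add_left_injective 1).injOn, ?_⟩⟩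
  · rintro ⟨t, rfl⟩
    simp
  · ext i
    cases i
    · simpa using h
    · simp

theorem injective_insert_zero_map_succ :
    Function.Injective fun s : Finset ℕ => insert 0 (s.map (addRightEmbedding 1)) := by
  intro s t h
  have h0 (u : Finset ℕ) : 0 ∉ u.map (addRightEmbedding 1) := by simp
  have := congrArg (erase · 0) h
  simpa only [erase_insert (h0 _), map_inj] using this

theorem range_insert_zero_map_succ :
    Set.range (fun s : Finset ℕ => insert 0 (s.map (addRightEmbedding 1))) = {s | 0 ∈ s} := by
  ext s
  refine ⟨?_, fun h => ?_⟩
  · rintro ⟨t, rfl⟩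
    simp
  · obtain ⟨t, ht⟩ : s.erase 0 ∈ Set.range (map (addRightEmbedding 1)) := by
      rw [range_map_succ]
      exact notMem_erase 0 s
    exact ⟨t, by simp only [ht, insert_erase h]⟩

theorem preimage_map_succ_sumFiber (k m : ℕ) :
    map (addRightEmbedding 1) ⁻¹' sumFiber k m = {t | t.card = k ∧ ∑ i ∈ t, i + k = m} := by
  ext t
  simp only [sumFiber, Set.mem_preimage, Set.mem_ofPred_eq, card_map, sum_map_succ]
  exact and_congr_right fun hk => by rw [hk]

theorem preimage_insert_zero_map_succ_sumFiber (k m : ℕ) :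
    (fun s : Finset ℕ => insert 0 (s.map (addRightEmbedding 1))) ⁻¹' sumFiber (k + 1) m =
      {t | t.card = k ∧ ∑ i ∈ t, i + k = m} := by
  ext t
  have h0 : 0 ∉ t.map (addRightEmbedding 1) := by simp
  simp only [sumFiber, Set.mem_preimage, Set.mem_ofPred_eq, card_insert_of_notMem h0,
    sum_insert h0, card_map, sum_map_succ, zero_add, add_left_inj]
  exact and_congr_right fun hk => by rw [hk]

theorem ncard_shifted_sumFiber (k m : ℕ) :
    {t : Finset ℕ | t.card = k ∧ ∑ i ∈ t, i + k = m}.ncard =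
      if k ≤ m then (sumFiber k (m - k)).ncard else 0 := by
  split_ifs with hk
  · congr 1
    ext t
    simp only [sumFiber, Set.mem_ofPred_eq]
    omega
  · convert Set.ncard_empty (Finset ℕ)
    ext t
    simp only [Set.mem_ofPred_eq, Set.mem_empty_iff_false, iff_false, not_and]
    omega

variable {R : Type*} [CommRing R]

variable (R) in
noncomputable def sumFiberSeries (n : ℕ) : PowerSeries R := mk fun m => ((sumFiber n m).ncard : R)

theorem sumFiberSeries_zero : sumFiberSeries R 0 = 1 := by
  ext m
  rw [sumFiberSeries, coeff_mk, coeff_one, sumFiber_zero]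
  split_ifs <;> simp

theorem coeff_X_pow_mul_sumFiberSeries (k m : ℕ) :
    coeff m (X ^ k * sumFiberSeries R k) =
      ({t : Finset ℕ | t.card = k ∧ ∑ i ∈ t, i + k = m}.ncard : R) := by
  rw [coeff_X_pow_mul', ncard_shifted_sumFiber]
  split_ifs <;> simp [sumFiberSeries]

theorem ncard_sumFiber_inter_notMem (k m : ℕ) :
    (sumFiber k m ∩ {s | 0 ∉ s}).ncard =
      {t : Finset ℕ | t.card = k ∧ ∑ i ∈ t, i + k = m}.ncard := by
  rw [← range_map_succ, ← Set.image_preimage_eq_inter_range, preimage_map_succ_sumFiber,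
    Set.ncard_image_of_injective _ (map_injective _)]

theorem ncard_sumFiber_inter_mem (k m : ℕ) :
    (sumFiber (k + 1) m ∩ {s | 0 ∈ s}).ncard =
      {t : Finset ℕ | t.card = k ∧ ∑ i ∈ t, i + k = m}.ncard := by
  rw [← range_insert_zero_map_succ, ← Set.image_preimage_eq_inter_range,
    preimage_insert_zero_map_succ_sumFiber,
    Set.ncard_image_of_injective _ injective_insert_zero_map_succ]

theorem sumFiberSeries_succ (n : ℕ) :
    sumFiberSeries R (n + 1) =
      X ^ (n + 1) * sumFiberSeries R (n + 1) + X ^ n * sumFiberSeries R n := by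
  ext m
  rw [map_add, coeff_X_pow_mul_sumFiberSeries, coeff_X_pow_mul_sumFiberSeries,
    ← ncard_sumFiber_inter_notMem, ← ncard_sumFiber_inter_mem, sumFiberSeries, coeff_mk,
    ← Set.ncard_inter_add_ncard_sdiff_eq_ncard (sumFiber (n + 1) m) {s | 0 ∈ s}
      (sumFiber_finite _ _), Nat.cast_add, add_comm, Set.sdiff_eq, Set.compl_ofPred]

theorem sumFiberSeries_succ_mul (n : ℕ) :
    sumFiberSeries R (n + 1) * (1 - X ^ (n + 1)) = X ^ n * sumFiberSeries R n := by
  linear_combination sumFiberSeries_succ (R := R) n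

theorem sumFiberSeries_mul_prod (n : ℕ) :
    sumFiberSeries R n * ∏ k ∈ Icc 1 n, (1 - X ^ k) = ∏ i ∈ range n, X ^ i := by
  induction n with
  | zero => simp [sumFiberSeries_zero]
  | succ n ih =>
    rw [prod_Icc_succ_top (by omega), prod_range_succ, ← ih]
    linear_combination (∏ k ∈ Icc 1 n, (1 - X ^ k)) * sumFiberSeries_succ_mul (R := R) n

end SumFiber

open SumFiber in
/-- Euler's identity `∏_{i=0}^∞ (1 + q^i z) = ∑_{n≥0} q^{n(n-1)/2} z^n / ((1-q)⋯(1-q^n))`,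
stated coefficientwise in `z`: the coefficient of `z^n` of the infinite product is the
elementary symmetric function `e_n(1, q, q², …)`, whose coefficient of `q^m` counts
sets of `n` distinct nonnegative integers with sum `m`.  The identity says that this
formal power series in `q` times `∏_{k=1}^n (1 - q^k)` equals `q^{n(n-1)/2}`. -/
theorem stmt9 (n : ℕ) :
    (PowerSeries.mk (fun m =>
        (Nat.card {s : Finset ℕ // s.card = n ∧ ∑ i ∈ s, i = m} : ℚ)) :
      PowerSeries ℚ)
      * ∏ k ∈ Finset.Icc 1 n, (1 - (PowerSeries.X : PowerSeries ℚ) ^ k)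
      = (PowerSeries.X : PowerSeries ℚ) ^ (n * (n - 1) / 2) := by
  rw [← sum_range_id, ← prod_pow_eq_pow_sum]
  exact sumFiberSeries_mul_prod n
end

section
/- For any partition λ, the following identity of rational functions in q and z holds: ∏_{i=1}^{l(λ)} (1 + q^{λ_i - i + 1/2} z)/(1 + q^{-i + 1/2} z) = ∏_{j=1}^{l(λ^t)} (1 + q^{j - 1/2} z)/(1 + q^{-λ^t_j + j - 1/2} z). -/
noncomputable abbrev stmt10K := FractionRing (MvPolynomial (Fin 2) ℚ)


/-- `u` plays the role of `q^{1/2}` (so `q^a = u^(2a)`). -/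
noncomputable def stmt10u : stmt10K :=
  algebraMap (MvPolynomial (Fin 2) ℚ) stmt10K (MvPolynomial.X 0)

/-- the indeterminate `z`. -/
noncomputable def stmt10z : stmt10K :=
  algebraMap (MvPolynomial (Fin 2) ℚ) stmt10K (MvPolynomial.X 1)

/-!
Writing `h c = 1 + q^(c + 1/2) z`, both sides are quotients of products of values of `h`, and
the identity follows from the classical fact (Macdonald, I.1.7) that for a partition `λ` inside
an `l × m` box the numbers `λ_i - i` (`1 ≤ i ≤ l`) and `j - 1 - λ^t_j` (`1 ≤ j ≤ m`) are distinct
and together fill the interval `[-l, m)`. Comparing with the empty partition, whose values are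
`-i` and `j - 1`, gives the identity after cross-multiplication.
-/

open Finset

/-- Partitions are read as antitone functions `ℕ → ℕ`, 0-indexed: `g j` is the number of rows
of `f` longer than `j`. -/
def AreConjugate (f g : ℕ → ℕ) : Prop :=
  ∀ i j, i < g j ↔ j < f i

namespace AreConjugate

variable {f g : ℕ → ℕ}

lemma symm (hfg : AreConjugate f g) : AreConjugate g f :=
  fun j i => (hfg i j).symm

lemma antitone (hfg : AreConjugate f g) : Antitone f := by
  intro i i' hii'
  by_contra! hlt
  have := (hfg i' (f i)).mpr hlt
  exact lt_irrefl _ ((hfg i (f i)).mp (lt_of_le_of_lt hii' this))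

lemma of_card_filter (hf : Antitone f) {l : ℕ} (hl : f l = 0) :
    AreConjugate f fun j => #{k ∈ range l | j < f k} := by
  intro i j
  constructor
  · intro hi
    by_contra! hfi
    have hsub : {k ∈ range l | j < f k} ⊆ range i := fun k hk => by
      simp only [mem_filter, mem_range] at hk ⊢
      by_contra! hik
      exact absurd (hf hik) (by omega)
    simpa using (card_le_card hsub).trans_lt' hi
  · intro hfi
    have hil : i < l := by
      by_contra! hli
      have := hf hli
      omega
    have hsub : range (i + 1) ⊆ {k ∈ range l | j < f k} := fun k hk => by
      simp only [mem_filter, mem_range] at hk ⊢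
      exact ⟨by omega, hfi.trans_le (hf (by omega))⟩
    simpa using card_le_card hsub

lemma strictAnti_sub_self (hf : Antitone f) : StrictAnti fun i : ℕ => (f i : ℤ) - i - 1 :=
  strictAnti_nat_of_succ_lt fun i => by have := hf (Nat.le_add_right i 1); push_cast; omega

lemma strictMono_self_sub (hg : Antitone g) : StrictMono fun j : ℕ => (j : ℤ) - g j :=
  strictMono_nat_of_lt_succ fun j => by have := hg (Nat.le_add_right j 1); push_cast; omega

lemma disjoint_image_sub_self_image_self_sub (hfg : AreConjugate f g) (l m : ℕ) :
    Disjoint ((range l).image fun i : ℕ => (f i : ℤ) - i - 1)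
      ((range m).image fun j : ℕ => (j : ℤ) - g j) := by
  simp only [disjoint_left, mem_image, mem_range, not_exists, not_and]
  rintro _ ⟨i, -, rfl⟩ j - hij
  have := hfg i j
  omega

theorem prod_mul_prod_eq_prod_Ico {M : Type*} [CommMonoid M] (h : ℤ → M)
    (hfg : AreConjugate f g) {l m : ℕ} (hl : g 0 ≤ l) (hm : f 0 ≤ m) :
    (∏ i ∈ range l, h ((f i : ℤ) - i - 1)) * ∏ j ∈ range m, h ((j : ℤ) - g j)
      = ∏ c ∈ Ico (-(l : ℤ)) m, h c := by
  have hf := hfg.antitone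
  have hg := hfg.symm.antitone
  have hdisj := hfg.disjoint_image_sub_self_image_self_sub l m
  have hsub : (range l).image (fun i : ℕ => (f i : ℤ) - i - 1)
      ∪ (range m).image (fun j : ℕ => (j : ℤ) - g j) ⊆ Ico (-(l : ℤ)) m := by
    simp only [union_subset_iff, image_subset_iff, mem_Ico, mem_range]
    refine ⟨fun i hi => ?_, fun j hj => ?_⟩
    · have := hf i.zero_le; omega
    · have := hg j.zero_le; omega
  have hcard : #(Ico (-(l : ℤ)) m) ≤ #((range l).image (fun i : ℕ => (f i : ℤ) - i - 1)
      ∪ (range m).image (fun j : ℕ => (j : ℤ) - g j)) := by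
    rw [card_union_of_disjoint hdisj, card_image_of_injective _ (strictAnti_sub_self hf).injective,
      card_image_of_injective _ (strictMono_self_sub hg).injective, Int.card_Ico]
    simp only [card_range]; omega
  rw [← eq_of_subset_of_card_le hsub hcard, prod_union hdisj,
    prod_image fun _ _ _ _ h => (strictAnti_sub_self hf).injective h,
    prod_image fun _ _ _ _ h => (strictMono_self_sub hg).injective h]

theorem prod_div_eq_prod_div {K : Type*} [CommGroupWithZero K] (h : ℤ → K) (hh : ∀ c, h c ≠ 0)
    (hfg : AreConjugate f g) {l m : ℕ} (hl : g 0 ≤ l) (hm : f 0 ≤ m) :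
    ∏ i ∈ range l, h ((f i : ℤ) - i - 1) / h (-(i : ℤ) - 1)
      = ∏ j ∈ range m, h j / h ((j : ℤ) - g j) := by
  have hbox := hfg.prod_mul_prod_eq_prod_Ico h hl hm
  have hempty := prod_mul_prod_eq_prod_Ico (f := 0) (g := 0) h (by simp [AreConjugate])
    l.zero_le m.zero_le
  simp only [Pi.zero_apply, Nat.cast_zero, zero_sub, sub_zero] at hempty
  rw [prod_div_distrib, prod_div_distrib, div_eq_div_iff (prod_ne_zero_iff.mpr fun _ _ => hh _)
    (prod_ne_zero_iff.mpr fun _ _ => hh _), hbox, ← hempty, mul_comm]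

end AreConjugate

lemma MvPolynomial.X_pow_add_X_pow_mul_X_ne_zero {σ R : Type*} [CommSemiring R] [Nontrivial R]
    {i j : σ} (hij : i ≠ j) (a b : ℕ) : (X i ^ a + X i ^ b * X j : MvPolynomial σ R) ≠ 0 := by
  classical
  intro h
  simpa [hij] using congrArg (eval fun k => if k = j then (0 : R) else 1) h

lemma stmt10u_ne_zero : stmt10u ≠ 0 :=
  (map_ne_zero_iff _ (IsFractionRing.injective _ stmt10K)).mpr (MvPolynomial.X_ne_zero 0)

lemma one_add_stmt10u_zpow_mul_stmt10z_ne_zero (n : ℤ) : 1 + stmt10u ^ n * stmt10z ≠ 0 := by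
  intro h
  obtain ⟨a, b, rfl⟩ : ∃ a b : ℕ, n = a - b := ⟨n.toNat, (-n).toNat, by omega⟩
  have hpoly : algebraMap (MvPolynomial (Fin 2) ℚ) stmt10K
      (MvPolynomial.X 0 ^ b + MvPolynomial.X 0 ^ a * MvPolynomial.X 1) = 0 := by
    calc _ = stmt10u ^ b * (1 + stmt10u ^ ((a : ℤ) - b) * stmt10z) := by
          rw [zpow_sub₀ stmt10u_ne_zero, zpow_natCast, zpow_natCast]
          field_simp [stmt10u_ne_zero]
          simp [stmt10u, stmt10z]
      _ = 0 := by rw [h, mul_zero]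
  exact MvPolynomial.X_pow_add_X_pow_mul_X_ne_zero (by decide) b a
    ((map_eq_zero_iff _ (IsFractionRing.injective _ stmt10K)).mp hpoly)

/-- For any partition `λ` (an antitone `f : ℕ → ℕ` vanishing from index `l` on) with
conjugate `λ^t` (of length `f 0`), as rational functions in `q^{1/2}` and `z`:
`∏_{i=1}^{l(λ)} (1 + q^{λ_i-i+1/2} z)/(1 + q^{-i+1/2} z)
  = ∏_{j=1}^{l(λ^t)} (1 + q^{j-1/2} z)/(1 + q^{-λ^t_j+j-1/2} z)`. -/
theorem stmt10 (f : ℕ → ℕ) (hf : Antitone f) (l : ℕ) (hl : ∀ i, l ≤ i → f i = 0)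
    (g : ℕ → ℕ) (hg : ∀ i, g i = ((Finset.range l).filter (fun j => i + 1 ≤ f j)).card) :
    (∏ i ∈ Finset.range l,
        (1 + stmt10u ^ (2 * (f i : ℤ) - 2 * ((i : ℤ) + 1) + 1) * stmt10z)
          / (1 + stmt10u ^ (-2 * ((i : ℤ) + 1) + 1) * stmt10z))
      = ∏ j ∈ Finset.range (f 0),
          (1 + stmt10u ^ (2 * ((j : ℤ) + 1) - 1) * stmt10z)
            / (1 + stmt10u ^ (-2 * (g j : ℤ) + 2 * ((j : ℤ) + 1) - 1) * stmt10z) := by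
  have hfg : AreConjugate f g := by
    convert AreConjugate.of_card_filter hf (hl l le_rfl)
    exact hg _
  have hgl : g 0 ≤ l := by
    by_contra! hlg
    simpa [hl l le_rfl] using (hfg l 0).mp hlg
  have key := hfg.prod_div_eq_prod_div (fun c => 1 + stmt10u ^ (2 * c + 1) * stmt10z)
    (fun _ => one_add_stmt10u_zpow_mul_stmt10z_ne_zero _) hgl le_rfl
  convert key using 6 <;> ring
end

section
/- For any partition λ and any nonzero integer n, the power sum p_n(q^{λ+ρ}) := Σ_{j=1}^{l(λ)} (q^{n(λ_j - j + 1/2)} - q^{n(-j + 1/2)}) + 1/(q^{n/2} - q^{-n/2}) satisfies p_n(q^{λ+ρ}) = -p_n(q^{λ^t + ρ})|_{q → q^{-1}}, i.e., substituting q ↦ q^{-1} in the same expression formed from the conjugate partition λ^t yields the negative. -/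
/-!
Give the cell `(j, k)` of the Young diagram of `λ` (row `j`, column `k`) the content `c = k - j`
and the weight `h (c + 1) - h c`, where `h c = q^{n(c - 1/2)}`. Summed along row `j` the weights
telescope to the `j`-th term `q^{n(λ_j - j + 1/2)} - q^{n(-j + 1/2)}` of `p_n(q^{λ+ρ})`; summed
down column `k` they telescope to minus the `k`-th term of `p_n(q^{λ^t+ρ})` at `q ↦ q⁻¹`. Summing
over the whole diagram row by row or column by column gives the identity, and the remaining terms
`1/(q^{n/2} - q^{-n/2})` are exchanged with their negatives by `q ↦ q⁻¹`.
-/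

/-- `u = q^{1/2}`, an indeterminate of the field `ℚ(q^{1/2})` (so `q^a = u^(2a)`). -/
noncomputable def stmt11u : RatFunc ℚ := RatFunc.X

open Finset

namespace Nat

theorem lt_card_filter_range_iff {p : ℕ → Prop} [DecidablePred p]
    (hp : ∀ ⦃i j⦄, i ≤ j → p j → p i) {l j : ℕ} :
    j < #{i ∈ range l | p i} ↔ j < l ∧ p j := by
  constructor
  · intro hj
    by_contra hnot
    have hcard : #{i ∈ range l | p i} ≤ j := by
      by_cases hjl : j < l
      · have hsub : {i ∈ range l | p i} ⊆ range j := fun i hi => by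
          simp only [mem_filter, mem_range] at hi ⊢
          by_contra hij
          exact hnot ⟨hjl, hp (not_lt.mp hij) hi.2⟩
        simpa using card_le_card hsub
      · exact (card_filter_le _ _).trans (by simpa using hjl)
    omega
  · rintro ⟨hjl, hpj⟩
    have hsub : range (j + 1) ⊆ {i ∈ range l | p i} := fun i hi => by
      simp only [mem_filter, mem_range] at hi ⊢
      exact ⟨by omega, hp (by omega) hpj⟩
    simpa using card_le_card hsub

end Nat

section YoungDiagram

variable {M : Type*} {f g : ℕ → ℕ} {l : ℕ}

theorem sum_range_sum_range_eq_of_conj [AddCommMonoid M] (hf : Antitone f)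
    (hg : ∀ k, g k = #{j ∈ range l | k < f j}) (F : ℕ → ℕ → M) :
    ∑ j ∈ range l, ∑ k ∈ range (f j), F j k = ∑ k ∈ range (f 0), ∑ j ∈ range (g k), F j k := by
  have hmem (j k : ℕ) : j < g k ↔ j < l ∧ k < f j :=
    hg k ▸ Nat.lt_card_filter_range_iff fun _ _ hij (hk : k < _) => hk.trans_le (hf hij)
  refine sum_comm' fun j k => ?_
  simp only [mem_range, hmem]
  exact ⟨fun h => ⟨h, h.2.trans_le (hf (Nat.zero_le j))⟩, And.left⟩

theorem sum_range_sub_eq_sum_range_sub_of_conj [AddCommGroup M] (hf : Antitone f)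
    (hg : ∀ k, g k = #{j ∈ range l | k < f j}) (h : ℤ → M) :
    ∑ j ∈ range l, (h (f j - j) - h (-j))
      = ∑ k ∈ range (f 0), (h (k + 1) - h (k + 1 - g k)) := by
  have row (j : ℕ) : ∑ k ∈ range (f j), (h ((k : ℤ) - j + 1) - h ((k : ℤ) - j))
      = h (f j - j) - h (-j) := by
    convert sum_range_sub (fun k : ℕ => h ((k : ℤ) - j)) (f j) using 3 <;> push_cast <;> ring_nf
  have col (k : ℕ) : ∑ j ∈ range (g k), (h ((k : ℤ) - j + 1) - h ((k : ℤ) - j))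
      = h (k + 1) - h (k + 1 - g k) := by
    convert sum_range_sub' (fun j : ℕ => h ((k : ℤ) - j + 1)) (g k) using 3 <;> push_cast <;> ring_nf
  simp_rw [← row, ← col]
  exact sum_range_sum_range_eq_of_conj hf hg fun j k => h ((k : ℤ) - j + 1) - h ((k : ℤ) - j)

end YoungDiagram

theorem stmt11_general (f : ℕ → ℕ) (hf : Antitone f) (l : ℕ)
    (g : ℕ → ℕ) (hg : ∀ i, g i = ((Finset.range l).filter (fun j => i + 1 ≤ f j)).card)
    (n : ℤ) :
    ((∑ j ∈ Finset.range l,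
        (stmt11u ^ ((2 * (f j : ℤ) - 2 * ((j : ℤ) + 1) + 1) * n)
          - stmt11u ^ ((-2 * ((j : ℤ) + 1) + 1) * n)))
      + (stmt11u ^ n - stmt11u ^ (-n))⁻¹)
    = - ((∑ j ∈ Finset.range (f 0),
        (stmt11u ^ (-((2 * (g j : ℤ) - 2 * ((j : ℤ) + 1) + 1) * n))
          - stmt11u ^ (-((-2 * ((j : ℤ) + 1) + 1) * n))))
      + (stmt11u ^ (-n) - stmt11u ^ n)⁻¹) := by
  set h : ℤ → RatFunc ℚ := fun c => stmt11u ^ ((2 * c - 1) * n)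
  have rows : ∑ j ∈ range l, (stmt11u ^ ((2 * (f j : ℤ) - 2 * ((j : ℤ) + 1) + 1) * n)
      - stmt11u ^ ((-2 * ((j : ℤ) + 1) + 1) * n)) = ∑ j ∈ range l, (h (f j - j) - h (-j)) :=
    sum_congr rfl fun j _ => by congr 2 <;> ring
  have cols : ∑ j ∈ range (f 0), (stmt11u ^ (-((2 * (g j : ℤ) - 2 * ((j : ℤ) + 1) + 1) * n))
      - stmt11u ^ (-((-2 * ((j : ℤ) + 1) + 1) * n)))
      = -∑ j ∈ range (f 0), (h (j + 1) - h (j + 1 - g j)) := by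
    rw [← sum_neg_distrib]
    exact sum_congr rfl fun j _ => by rw [neg_sub]; congr 2 <;> ring
  rw [rows, cols, sum_range_sub_eq_sum_range_sub_of_conj hf hg, ← neg_sub (stmt11u ^ n), inv_neg]
  abel

/-- For any partition `λ` (an antitone `f : ℕ → ℕ` vanishing from index `l` on, with
conjugate `g = λ^t` of length `f 0`) and any nonzero integer `n`, the power sum
`p_n(q^{λ+ρ}) = ∑_{j=1}^{l(λ)} (q^{n(λ_j-j+1/2)} - q^{n(-j+1/2)}) + 1/(q^{n/2}-q^{-n/2})`
satisfies `p_n(q^{λ+ρ}) = - p_n(q^{λ^t+ρ})|_{q → q^{-1}}` (the substitution `q ↦ q⁻¹`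
negates every exponent of `u`). -/
theorem stmt11 (f : ℕ → ℕ) (hf : Antitone f) (l : ℕ) (hl : ∀ i, l ≤ i → f i = 0)
    (g : ℕ → ℕ) (hg : ∀ i, g i = ((Finset.range l).filter (fun j => i + 1 ≤ f j)).card)
    (n : ℤ) (hn : n ≠ 0) :
    ((∑ j ∈ Finset.range l,
        (stmt11u ^ ((2 * (f j : ℤ) - 2 * ((j : ℤ) + 1) + 1) * n)
          - stmt11u ^ ((-2 * ((j : ℤ) + 1) + 1) * n)))
      + (stmt11u ^ n - stmt11u ^ (-n))⁻¹)
    = - ((∑ j ∈ Finset.range (f 0),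
        (stmt11u ^ (-((2 * (g j : ℤ) - 2 * ((j : ℤ) + 1) + 1) * n))
          - stmt11u ^ (-((-2 * ((j : ℤ) + 1) + 1) * n))))
      + (stmt11u ^ (-n) - stmt11u ^ n)⁻¹) :=
  stmt11_general f hf l g hg n
end

section
/- Let r(X) ∈ Z[X], p prime, i ≥ 1, and set t = q - 2 + q^{-1} and t_p = q^p - 2 + q^{-p} in Z[q,q^{-1}]. Then r(t)^{p^i} - r(t_p)^{p^{i-1}} is divisible by p^i in Z[q,q^{-1}]; equivalently there exists g ∈ Z[X] with r(t)^{p^i} - r(t_p)^{p^{i-1}} = p^i g(t). -/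
/-!
Write `t = q - 2 + q⁻¹`. Since the Dickson polynomial `D_p` satisfies
`D_p(q + q⁻¹) = q^p + q^{-p}`, we have `t_p = P(t)` for `P(X) = D_p(X + 2) - 2 ∈ ℤ[X]`.
Modulo `p`, `D_p ≡ X^p`, hence `P ≡ (X + 2)^p - 2 ≡ X^p`, and Frobenius on `𝔽_p[X]` gives
`r^p ≡ r(X^p) ≡ r ∘ P (mod p)` in `ℤ[X]`.
The usual lifting `a ≡ b (mod p) ⇒ a^{p^k} ≡ b^{p^k} (mod p^{k+1})` yields
`r^{p^{k+1}} - (r ∘ P)^{p^k} = p^{k+1} g` in `ℤ[X]`; evaluating at `t` gives the theorem.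
-/

open LaurentPolynomial Polynomial

namespace Polynomial

theorem natCast_dvd_iff_map_zmod_eq_zero {p : ℕ} {f : ℤ[X]} :
    (p : ℤ[X]) ∣ f ↔ f.map (Int.castRingHom (ZMod p)) = 0 := by
  rw [← C_eq_natCast, C_dvd_iff_dvd_coeff, Polynomial.ext_iff]
  simp [ZMod.intCast_zmod_eq_zero_iff_dvd]

theorem natCast_dvd_pow_sub_comp {p : ℕ} [Fact p.Prime] (f : ℤ[X]) {P : ℤ[X]}
    (hP : P.map (Int.castRingHom (ZMod p)) = X ^ p) : (p : ℤ[X]) ∣ f ^ p - f.comp P := by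
  rw [natCast_dvd_iff_map_zmod_eq_zero, Polynomial.map_sub, Polynomial.map_pow, map_comp, hP,
    ← expand_eq_comp_X_pow, ZMod.expand_card, sub_self]

theorem natCast_pow_dvd_pow_sub_comp_pow {p : ℕ} [Fact p.Prime] (f : ℤ[X]) {P : ℤ[X]}
    (hP : P.map (Int.castRingHom (ZMod p)) = X ^ p) (k : ℕ) :
    (p : ℤ[X]) ^ (k + 1) ∣ f ^ p ^ (k + 1) - f.comp P ^ p ^ k := by
  simpa only [← pow_mul, ← pow_succ'] using
    dvd_sub_pow_of_dvd_sub (natCast_dvd_pow_sub_comp f hP) k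

end Polynomial

/-- `q^n - 2 + q^{-n}` as a polynomial in `t = q - 2 + q⁻¹`. -/
noncomputable def shiftedDickson (n : ℕ) : ℤ[X] := (dickson 1 1 n).comp (X + 2) - 2

theorem aeval_shiftedDickson {A : Type*} [CommRing A] [Algebra ℤ A] {x y : A} (h : x * y = 1)
    (n : ℕ) :
    aeval (x - 2 + y) (shiftedDickson n) = x ^ n - 2 + y ^ n := by
  have hsum : x - 2 + y + 2 = x + y := by ring
  rw [shiftedDickson, map_sub, aeval_comp, map_add, aeval_X, map_ofNat, hsum,
    aeval_def, eval₂_eq_eval_map, map_dickson, map_one, dickson_one_one_eval_add_inv x y h]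
  ring

theorem map_shiftedDickson_zmod (p : ℕ) [Fact p.Prime] :
    (shiftedDickson p).map (Int.castRingHom (ZMod p)) = X ^ p := by
  have h2 : (2 : (ZMod p)[X]) ^ p = 2 := by
    rw [← C_ofNat, ← C_pow, ZMod.pow_card]
  rw [shiftedDickson, Polynomial.map_sub, map_comp, map_dickson, map_one, dickson_one_one_charP,
    Polynomial.map_add, map_X, Polynomial.map_ofNat, X_pow_comp,
    add_pow_char, h2, add_sub_cancel_right]

/-- For `r ∈ ℤ[X]`, `p` prime, `i ≥ 1`, with `t = q - 2 + q⁻¹` and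
`t_p = q^p - 2 + q^{-p}` in `ℤ[q,q⁻¹]`: there exists `g ∈ ℤ[X]` with
`r(t)^{p^i} - r(t_p)^{p^{i-1}} = p^i g(t)`. -/
theorem stmt15 (r : Polynomial ℤ) (p : ℕ) (hp : p.Prime) (i : ℕ) (hi : 1 ≤ i) :
    ∃ g : Polynomial ℤ,
      (Polynomial.aeval ((T 1 - 2 + T (-1)) : LaurentPolynomial ℤ) r) ^ (p ^ i)
        - (Polynomial.aeval ((T (p : ℤ) - 2 + T (-(p : ℤ))) : LaurentPolynomial ℤ) r)
            ^ (p ^ (i - 1))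
      = (p : LaurentPolynomial ℤ) ^ i
          * Polynomial.aeval ((T 1 - 2 + T (-1)) : LaurentPolynomial ℤ) g := by
  have : Fact p.Prime := ⟨hp⟩
  obtain ⟨k, rfl⟩ := Nat.exists_eq_add_of_le' hi
  have hT : (T 1 : LaurentPolynomial ℤ) * T (-1) = 1 := by rw [← T_add, add_neg_cancel, T_zero]
  have ht_p : aeval (T 1 - 2 + T (-1) : LaurentPolynomial ℤ) (shiftedDickson p)
      = T p - 2 + T (-p) := by
    rw [aeval_shiftedDickson hT, T_pow, T_pow, mul_one, mul_neg_one]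
  obtain ⟨g, hg⟩ := natCast_pow_dvd_pow_sub_comp_pow r (map_shiftedDickson_zmod p) k
  refine ⟨g, ?_⟩
  rw [Nat.add_sub_cancel]
  have hg_t := congrArg (aeval (T 1 - 2 + T (-1) : LaurentPolynomial ℤ)) hg
  rwa [map_sub, map_mul, map_pow, map_pow, map_pow, map_natCast, aeval_comp, ht_p] at hg_t
end
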